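/- The normalized (p,q)-Rogers-Szegő polynomial ψ_n(x;p,q) satisfies the (p,q)-difference equation ((p-q) x D_{p,q}² - (η_p + p^{n-1} x η_{p^{-1}}) D_{p,q} + [n]_{p,q}) ψ_n(x;p,q) = 0. -/

import Mathlib

/-!
Since `D_{p,q} x^k = [k]_{p,q} x^{k-1}`, the (p,q)-binomial identity
`[n+1 choose k+1] [k+1] = [n+1] [n choose k]` gives `D_{p,q} H_{n+1} = [n+1] H_n`, while the
(p,q)-Pascal rule gives `H_{n+1}(x) = H_n(qx) + p^n x H_n(x/p)`. Substituting both, the operator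
applied to `H_{n+1}` becomes `[n+1]` times `H_{n+1}(x) - H_n(qx) - p^n x H_n(x/p) = 0`. The
operator is linear, so the normalization of `ψ_n` plays no role.
-/

/-- The (p,q)-number `[n]_{p,q} = (p^n - q^n)/(p-q)`. -/
noncomputable def pqNum (p q : ℝ) (n : ℕ) : ℝ := (p ^ n - q ^ n) / (p - q)

/-- The (p,q)-factorial `[n]_{p,q}!`. -/
noncomputable def pqFac (p q : ℝ) (n : ℕ) : ℝ := ∏ j ∈ Finset.range n, pqNum p q (j + 1)

/-- The (p,q)-binomial coefficient. -/
noncomputable def pqBinom (p q : ℝ) (n k : ℕ) : ℝ :=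
  pqFac p q n / (pqFac p q k * pqFac p q (n - k))

/-- The (p,q)-Rogers-Szegő polynomial `H_n(x;p,q)`. -/
noncomputable def pqRogersSzego (p q : ℝ) (n : ℕ) (x : ℝ) : ℝ :=
  ∑ k ∈ Finset.range (n + 1), pqBinom p q n k * x ^ k

/-- The normalized (p,q)-Rogers-Szegő polynomial `ψ_n(x;p,q)`. -/
noncomputable def psiPQ (p q : ℝ) (n : ℕ) (x : ℝ) : ℝ :=
  pqRogersSzego p q n x / Real.sqrt (pqFac p q n)

/-- The (p,q)-difference operator. -/
noncomputable def Dpq (p q : ℝ) (f : ℝ → ℝ) (x : ℝ) : ℝ :=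
  (f (p * x) - f (q * x)) / ((p - q) * x)

variable {p q : ℝ}

lemma pqNum_mul_sub (hpq : p ≠ q) (m : ℕ) : pqNum p q m * (p - q) = p ^ m - q ^ m :=
  div_mul_cancel₀ _ (sub_ne_zero.mpr hpq)

lemma pqNum_add (hpq : p ≠ q) (a b : ℕ) :
    pqNum p q (a + b) = q ^ a * pqNum p q b + p ^ b * pqNum p q a := by
  have hpq' : p - q ≠ 0 := sub_ne_zero.mpr hpq
  simp only [pqNum]
  field_simp
  ring

lemma pqNum_pos (hq0 : 0 < q) (hqp : q < p) {m : ℕ} (hm : m ≠ 0) : 0 < pqNum p q m :=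
  div_pos (by linarith [pow_lt_pow_left₀ hqp hq0.le hm]) (by linarith)

lemma pqFac_zero : pqFac p q 0 = 1 := Finset.prod_range_zero _

lemma pqFac_succ (m : ℕ) : pqFac p q (m + 1) = pqFac p q m * pqNum p q (m + 1) :=
  Finset.prod_range_succ _ _

lemma pqFac_pos (hq0 : 0 < q) (hqp : q < p) (m : ℕ) : 0 < pqFac p q m :=
  Finset.prod_pos fun _ _ => pqNum_pos hq0 hqp (Nat.succ_ne_zero _)

lemma pqBinom_zero_right {n : ℕ} (hn : pqFac p q n ≠ 0) : pqBinom p q n 0 = 1 := by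
  simp [pqBinom, pqFac_zero, hn]

lemma pqBinom_self {n : ℕ} (hn : pqFac p q n ≠ 0) : pqBinom p q n n = 1 := by
  simp [pqBinom, pqFac_zero, hn]

section Positive

variable (hq0 : 0 < q) (hqp : q < p)
include hq0 hqp

lemma pqBinom_succ_mul_pqNum (a b : ℕ) :
    pqBinom p q (a + b + 1) (a + 1) * pqNum p q (a + 1)
      = pqNum p q (a + b + 1) * pqBinom p q (a + b) a := by
  have hfa := (pqFac_pos hq0 hqp a).ne'
  have hfb := (pqFac_pos hq0 hqp b).ne'
  have hfab := (pqFac_pos hq0 hqp (a + b)).ne'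
  have hna := (pqNum_pos hq0 hqp a.succ_ne_zero).ne'
  rw [pqBinom, pqBinom, show a + b + 1 - (a + 1) = b by omega, Nat.add_sub_cancel_left,
    pqFac_succ (a + b), pqFac_succ a]
  field_simp

lemma pqBinom_succ_succ (a b : ℕ) :
    pqBinom p q (a + b + 2) (a + 1)
      = q ^ (a + 1) * pqBinom p q (a + b + 1) (a + 1) + p ^ (b + 1) * pqBinom p q (a + b + 1) a := by
  have hfa := (pqFac_pos hq0 hqp a).ne'
  have hfb := (pqFac_pos hq0 hqp b).ne'
  have hfab := (pqFac_pos hq0 hqp (a + b + 1)).ne'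
  have hna := (pqNum_pos hq0 hqp a.succ_ne_zero).ne'
  have hnb := (pqNum_pos hq0 hqp b.succ_ne_zero).ne'
  have hsum : pqNum p q (a + b + 2)
      = q ^ (a + 1) * pqNum p q (b + 1) + p ^ (b + 1) * pqNum p q (a + 1) := by
    rw [← pqNum_add hqp.ne', show a + 1 + (b + 1) = a + b + 2 by omega]
  rw [pqBinom, pqBinom, pqBinom, show a + b + 2 - (a + 1) = b + 1 by omega,
    show a + b + 1 - (a + 1) = b by omega, show a + b + 1 - a = b + 1 by omega,
    pqFac_succ (a + b + 1), pqFac_succ a, pqFac_succ b, hsum]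
  field_simp

lemma pqRogersSzego_succ_sub (m : ℕ) (y : ℝ) :
    pqRogersSzego p q (m + 1) (p * y) - pqRogersSzego p q (m + 1) (q * y)
      = (p - q) * y * (pqNum p q (m + 1) * pqRogersSzego p q m y) := by
  simp only [pqRogersSzego]
  rw [← Finset.sum_sub_distrib, Finset.sum_range_succ', Finset.mul_sum, Finset.mul_sum]
  simp only [pow_zero, mul_one, sub_self, add_zero]
  refine Finset.sum_congr rfl fun j hj => ?_
  obtain ⟨b, rfl⟩ : ∃ b, m = j + b := ⟨m - j, by grind⟩
  calc pqBinom p q (j + b + 1) (j + 1) * (p * y) ^ (j + 1)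
        - pqBinom p q (j + b + 1) (j + 1) * (q * y) ^ (j + 1)
      = pqBinom p q (j + b + 1) (j + 1) * pqNum p q (j + 1) * (p - q) * y ^ (j + 1) := by
        rw [mul_assoc _ (pqNum p q _), pqNum_mul_sub hqp.ne']
        ring
    _ = (p - q) * y * (pqNum p q (j + b + 1) * (pqBinom p q (j + b) j * y ^ j)) := by
        rw [pqBinom_succ_mul_pqNum hq0 hqp]
        ring

lemma Dpq_pqRogersSzego_succ (m : ℕ) {y : ℝ} (hy : y ≠ 0) :
    Dpq p q (pqRogersSzego p q (m + 1)) y = pqNum p q (m + 1) * pqRogersSzego p q m y := by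
  have hpq : p - q ≠ 0 := sub_ne_zero.mpr hqp.ne'
  rw [Dpq, pqRogersSzego_succ_sub hq0 hqp, mul_div_cancel_left₀ _ (mul_ne_zero hpq hy)]

lemma pqRogersSzego_succ (m : ℕ) (x : ℝ) :
    pqRogersSzego p q (m + 1) x
      = pqRogersSzego p q m (q * x) + p ^ m * x * pqRogersSzego p q m (p⁻¹ * x) := by
  have hp : p ≠ 0 := (hq0.trans hqp).ne'
  have hfac := fun k => (pqFac_pos hq0 hqp k).ne'
  have hinner : ∀ j ∈ Finset.range m,
      pqBinom p q (m + 1) (j + 1) * x ^ (j + 1)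
        = pqBinom p q m (j + 1) * (q * x) ^ (j + 1)
          + p ^ m * x * (pqBinom p q m j * (p⁻¹ * x) ^ j) := by
    intro j hj
    obtain ⟨b, rfl⟩ : ∃ b, m = j + b + 1 := ⟨m - j - 1, by grind⟩
    rw [pqBinom_succ_succ hq0 hqp j b]
    simp only [mul_pow, inv_pow]
    field_simp
    ring
  have hlast : p ^ m * x * (pqBinom p q m m * (p⁻¹ * x) ^ m)
      = pqBinom p q (m + 1) (m + 1) * x ^ (m + 1) := by
    rw [pqBinom_self (hfac _), pqBinom_self (hfac _), mul_pow, inv_pow]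
    field_simp
    ring
  rw [pqRogersSzego, pqRogersSzego, pqRogersSzego, Finset.sum_range_succ',
    Finset.sum_range_succ, Finset.sum_congr rfl hinner, Finset.sum_add_distrib,
    Finset.sum_range_succ' _ m, Finset.mul_sum, Finset.sum_range_succ _ m, ← hlast,
    pqBinom_zero_right (hfac _), pqBinom_zero_right (hfac _)]
  ring

end Positive

/-- The operator `(p-q) x D_{p,q}² - (η_p + p^{n-1} x η_{p⁻¹}) D_{p,q} + [n]_{p,q}`. -/
noncomputable def pqDiffOp (p q : ℝ) (n : ℕ) (f : ℝ → ℝ) (x : ℝ) : ℝ :=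
  (p - q) * x * Dpq p q (Dpq p q f) x
    - (Dpq p q f (p * x) + p ^ (n - 1) * x * Dpq p q f (p⁻¹ * x)) + pqNum p q n * f x

lemma Dpq_div_const (f : ℝ → ℝ) (c : ℝ) :
    Dpq p q (fun y => f y / c) = fun y => Dpq p q f y / c := by
  funext y
  simp only [Dpq]
  ring

lemma pqDiffOp_div_const (n : ℕ) (f : ℝ → ℝ) (c x : ℝ) :
    pqDiffOp p q n (fun y => f y / c) x = pqDiffOp p q n f x / c := by
  simp only [pqDiffOp, Dpq_div_const]
  ring

lemma pqDiffOp_pqRogersSzego (hq0 : 0 < q) (hqp : q < p) (n : ℕ) {x : ℝ} (hx : x ≠ 0) :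
    pqDiffOp p q n (pqRogersSzego p q n) x = 0 := by
  rcases n with _ | m
  · simp [pqDiffOp, pqRogersSzego, pqBinom, pqFac_zero, Dpq, pqNum]
  have hp : p ≠ 0 := (hq0.trans hqp).ne'
  have hpq : p - q ≠ 0 := sub_ne_zero.mpr hqp.ne'
  have hD := fun y (hy : y ≠ 0) => Dpq_pqRogersSzego_succ hq0 hqp m hy
  rw [pqDiffOp, Dpq.eq_1 p q (Dpq p q _) x, hD _ (mul_ne_zero hp hx),
    hD _ (mul_ne_zero hq0.ne' hx), hD _ (mul_ne_zero (inv_ne_zero hp) hx),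
    Nat.add_sub_cancel, pqRogersSzego_succ hq0 hqp m x]
  field_simp
  ring

/-- The (p,q)-difference equation
`((p-q) x D_{p,q}² - (η_p + p^{n-1} x η_{p⁻¹}) D_{p,q} + [n]_{p,q}) ψ_n(x;p,q) = 0`,
where `η_s f(x) = f(sx)`. -/
theorem psiPQ_pq_difference_equation (p q : ℝ) (hq0 : 0 < q) (hqp : q < p) (n : ℕ)
    (x : ℝ) (hx : x ≠ 0) :
    (p - q) * x * Dpq p q (Dpq p q (psiPQ p q n)) x
        - (Dpq p q (psiPQ p q n) (p * x) + p ^ (n - 1) * x * Dpq p q (psiPQ p q n) (p⁻¹ * x))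
        + pqNum p q n * psiPQ p q n x = 0 := by
  change pqDiffOp p q n (fun y => pqRogersSzego p q n y / √(pqFac p q n)) x = 0
  rw [pqDiffOp_div_const, pqDiffOp_pqRogersSzego hq0 hqp n hx, zero_div]
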